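/- arXiv:2412.10234 — 3 statements merged into one kernel-verified Lean document; each statement's English description precedes it below -/
import Mathlib

section
/- Let G be a group acting on the right on commutative ℂ-algebras of functions, and let V be a G-module of functions on which G acts by operators |_{a}γ for weights a, satisfying |_{a}(γ₁γ₂) = (|_{a}γ₁)|_{a}γ₂ and multiplicativity (fg)|_{a+b}γ = (f|_aγ)(g|_bγ). Suppose I, I₁ are functions, r, r₁, r₂ : G → V are maps such that: (i) r₁ and r₂ are 1-cocycles, i.e., r_j(γ₁γ₂) = r_j(γ₁)|γ₂ + r_j(γ₂); (ii) I₁|(1−γ) = r₁(γ) for all γ; (iii) I|(γ−1) = −r(γ) + r₁(γ)r₂(γ) − r₂(γ)·I₁ for all γ. Then for all γ₁, γ₂ ∈ G: r(γ₁γ₂) − r(γ₁)|γ₂ − r(γ₂) = (r₁(γ₁)|γ₂)·r₂(γ₂). -/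
/-!
Write `|` for the actions (of the weights the products force) and `c(γ) = (I₁|γ)·r₂(γ)`.
Eliminating `r₁` with `I₁|(1-γ) = r₁(γ)` turns the depth-2 relation into
`r(γ) = I - I|γ - c(γ)`. The coboundary `I - I|γ` has no cocycle defect, and since `r₂` is a
cocycle, the defect of the cup product `c` is `((I₁|γ₁ - I₁)|γ₂)·r₂(γ₂) = -(r₁(γ₁)|γ₂)·r₂(γ₂)`.
-/

def cocycleDefect {G A : Type*} [Mul G] [Sub A] (ρ : A → G → A) (r : G → A) (γ₁ γ₂ : G) : A :=
  r (γ₁ * γ₂) - ρ (r γ₁) γ₂ - r γ₂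

section

variable {G A : Type*}

theorem map_sub_of_map_add [AddCommGroup A] {ρ : A → G → A}
    (hadd : ∀ x y γ, ρ (x + y) γ = ρ x γ + ρ y γ) (x y : A) (γ : G) :
    ρ (x - y) γ = ρ x γ - ρ y γ :=
  (AddMonoidHom.mk' (ρ · γ) (hadd · · γ)).map_sub x y

theorem cocycleDefect_coboundary_sub [Mul G] [AddCommGroup A] {ρ : A → G → A}
    (hadd : ∀ x y γ, ρ (x + y) γ = ρ x γ + ρ y γ)
    (hcomp : ∀ x γ₁ γ₂, ρ (ρ x γ₁) γ₂ = ρ x (γ₁ * γ₂)) (I : A) (c : G → A) (γ₁ γ₂ : G) :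
    cocycleDefect ρ (fun γ => I - ρ I γ - c γ) γ₁ γ₂ = -cocycleDefect ρ c γ₁ γ₂ := by
  simp only [cocycleDefect, map_sub_of_map_add hadd, hcomp]
  abel

theorem cocycleDefect_act_mul_cocycle [Mul G] [CommRing A] {ρ ρ₁ ρ₂ : A → G → A}
    (hadd₁ : ∀ x y γ, ρ₁ (x + y) γ = ρ₁ x γ + ρ₁ y γ)
    (hcomp₁ : ∀ x γ₁ γ₂, ρ₁ (ρ₁ x γ₁) γ₂ = ρ₁ x (γ₁ * γ₂))
    (hmul : ∀ x y γ, ρ (x * y) γ = ρ₁ x γ * ρ₂ y γ) (J : A) {s : G → A}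
    (hs : ∀ γ₁ γ₂, s (γ₁ * γ₂) = ρ₂ (s γ₁) γ₂ + s γ₂) (γ₁ γ₂ : G) :
    cocycleDefect ρ (fun γ => ρ₁ J γ * s γ) γ₁ γ₂ = ρ₁ (ρ₁ J γ₁ - J) γ₂ * s γ₂ := by
  rw [map_sub_of_map_add hadd₁, hcomp₁]
  simp only [cocycleDefect, hmul, hcomp₁, hs]
  ring

end

theorem stmt3_general {G A : Type*} [Group G] [CommRing A]
    (act : ℝ → A → G → A)
    (h_add : ∀ (a : ℝ) (x y : A) (γ : G), act a (x + y) γ = act a x γ + act a y γ)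
    (h_comp : ∀ (a : ℝ) (x : A) (γ₁ γ₂ : G),
      act a (act a x γ₁) γ₂ = act a x (γ₁ * γ₂))
    (h_mul : ∀ (a b : ℝ) (x y : A) (γ : G),
      act (a + b) (x * y) γ = act a x γ * act b y γ)
    (k₁ k₂ : ℝ) (I I₁ : A) (r r₁ r₂ : G → A)
    (hr₂ : ∀ γ₁ γ₂ : G, r₂ (γ₁ * γ₂) = act (2 - k₂) (r₂ γ₁) γ₂ + r₂ γ₂)
    (hI₁ : ∀ γ : G, I₁ - act (2 - k₁) I₁ γ = r₁ γ)
    (hI : ∀ γ : G,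
      act ((2 - k₁) + (2 - k₂)) I γ - I = -(r γ) + r₁ γ * r₂ γ - r₂ γ * I₁)
    (γ₁ γ₂ : G) :
    r (γ₁ * γ₂) - act ((2 - k₁) + (2 - k₂)) (r γ₁) γ₂ - r γ₂
      = act (2 - k₁) (r₁ γ₁) γ₂ * r₂ γ₂ := by
  have hr : r = fun γ => I - act ((2 - k₁) + (2 - k₂)) I γ - act (2 - k₁) I₁ γ * r₂ γ := by
    funext γ
    linear_combination hI γ - r₂ γ * hI₁ γ
  calc r (γ₁ * γ₂) - act ((2 - k₁) + (2 - k₂)) (r γ₁) γ₂ - r γ₂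
      = cocycleDefect (act ((2 - k₁) + (2 - k₂))) r γ₁ γ₂ := rfl
    _ = -(act (2 - k₁) (act (2 - k₁) I₁ γ₁ - I₁) γ₂ * r₂ γ₂) := by
      rw [hr, cocycleDefect_coboundary_sub (h_add _) (h_comp _),
        cocycleDefect_act_mul_cocycle (h_add _) (h_comp _) (h_mul _ _) I₁ hr₂]
    _ = act (2 - k₁) (r₁ γ₁) γ₂ * r₂ γ₂ := by
      rw [← hI₁, map_sub_of_map_add (h_add _), map_sub_of_map_add (h_add _)]
      ring

/-- Abstract depth-2 cocycle relation (algebraic content of Corollary 6.5).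
`G` acts on the right on a commutative `ℂ`-algebra `A` of functions by weight actions
`act a`, compatible with products in the weight-additive sense. Given the depth-1
cocycle relations for `r₁, r₂`, the Eichler relation `I₁|(1−γ) = r₁(γ)` and the
depth-2 relation `I|(γ−1) = −r(γ) + r₁(γ)r₂(γ) − r₂(γ)·I₁`, it follows that
`r(γ₁γ₂) − r(γ₁)|γ₂ − r(γ₂) = (r₁(γ₁)|γ₂)·r₂(γ₂)`. -/
theorem stmt3 {G A : Type*} [Group G] [CommRing A] [Algebra ℂ A]
    (act : ℝ → A → G → A)
    (h_add : ∀ (a : ℝ) (x y : A) (γ : G), act a (x + y) γ = act a x γ + act a y γ)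
    (h_comp : ∀ (a : ℝ) (x : A) (γ₁ γ₂ : G),
      act a (act a x γ₁) γ₂ = act a x (γ₁ * γ₂))
    (h_one : ∀ (a : ℝ) (x : A), act a x 1 = x)
    (h_mul : ∀ (a b : ℝ) (x y : A) (γ : G),
      act (a + b) (x * y) γ = act a x γ * act b y γ)
    (k₁ k₂ : ℝ) (I I₁ : A) (r r₁ r₂ : G → A)
    (hr₁ : ∀ γ₁ γ₂ : G, r₁ (γ₁ * γ₂) = act (2 - k₁) (r₁ γ₁) γ₂ + r₁ γ₂)
    (hr₂ : ∀ γ₁ γ₂ : G, r₂ (γ₁ * γ₂) = act (2 - k₂) (r₂ γ₁) γ₂ + r₂ γ₂)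
    (hI₁ : ∀ γ : G, I₁ - act (2 - k₁) I₁ γ = r₁ γ)
    (hI : ∀ γ : G,
      act ((2 - k₁) + (2 - k₂)) I γ - I = -(r γ) + r₁ γ * r₂ γ - r₂ γ * I₁)
    (γ₁ γ₂ : G) :
    r (γ₁ * γ₂) - act ((2 - k₁) + (2 - k₂)) (r γ₁) γ₂ - r γ₂
      = act (2 - k₁) (r₁ γ₁) γ₂ * r₂ γ₂ :=
  stmt3_general act h_add h_comp h_mul k₁ k₂ I I₁ r r₁ r₂ hr₂ hI₁ hI γ₁ γ₂
end

section
/- For m₁,…,m_r ∈ ℕ, n_r ≤ m_r, and the chain of conditions n_{j} ≤ m_j + m_{j+1} + ⋯ + m_r − n_{j+1} − ⋯ − n_r for all j, define A^{[m₁,…,m_r]}_{n₁,…,n_r} := C(m_r, n_r) · C(m_r + m_{r−1} − n_r, n_{r−1}) ⋯ C(m_r + ⋯ + m₂ − n_r − ⋯ − n₂, n₁). Prove the polynomial identity: for indeterminates w₁,…,w_r, τ, ∏_{j=1}^r (w_j − τ)^{m_j} = Σ over tuples (n₁,…,n_r) with n₂,…,n_r ≥ 0 and n₁ = m₁+⋯+m_r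 − n₂ − ⋯ − n_r − n, summed over 0 ≤ n ≤ m₁+⋯+m_r, of A^{[m₁,…,m_r]}_{n₁,…,n_r} · (w₁ − a)^{n₁} (w₂ − w₁)^{n₂} ⋯ (w_r − w_{r−1})^{n_r} (a − τ)^n, for any indeterminate a. -/
/-!
Induction on `r`, splitting off the first factor. By induction, with `w₁` in the role of `a`,
the remaining factors expand in the differences `w_{j+1} − w_j` and powers of `w₁ − τ`; the
factor `(w₁ − τ)^{m₁}` merges with the latter, and the binomial theorem for
`w₁ − τ = (w₁ − a) + (a − τ)` produces the outermost binomial coefficient of `A`. Summing over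
the fixed box `{0,…,N}^r` for any `N ≥ m₁ + ⋯ + m_r` keeps the index set stable along the
induction, since binomial coefficients vanish outside the relevant range.
-/

open Finset

/-- The coefficient `A^{[m₁,…,m_r]}_{n₁,…,n_r} = ∏_j C(m_j + m_{j+1} + ⋯ + m_r − n_{j+1}
− ⋯ − n_r, n_j)` (the binomial coefficient being declared `0` whenever the chain
condition `n_{j+1} + ⋯ + n_r ≤ m_j + ⋯ + m_r` fails). -/
def Acoef (r : ℕ) (m ν : Fin r → ℕ) : ℕ :=
  ∏ j : Fin r,
    if (∑ l ∈ Finset.Ioi j, ν l) ≤ (∑ l ∈ Finset.Ici j, m l) then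
      Nat.choose ((∑ l ∈ Finset.Ici j, m l) - (∑ l ∈ Finset.Ioi j, ν l)) (ν j)
    else 0

theorem Fintype.sum_piFinset_succ {n : ℕ} {α : Fin (n + 1) → Type*} [∀ i, DecidableEq (α i)]
    {M : Type*} [AddCommMonoid M] (S : ∀ i, Finset (α i)) (g : (∀ i, α i) → M) :
    ∑ ν ∈ Fintype.piFinset S, g ν
      = ∑ x ∈ S 0, ∑ ν ∈ Fintype.piFinset (fun i : Fin n => S i.succ), g (Fin.cons x ν) := by
  have h := filter_piFinset_eq_map_consEquiv S (fun _ => True)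
  simp only [filter_true] at h
  rw [h, sum_map, sum_product]
  rfl

theorem add_pow_eq_sum_range_of_le {R : Type*} [CommSemiring R] (x y : R) {n N : ℕ}
    (h : n ≤ N) :
    (x + y) ^ n = ∑ k ∈ range (N + 1), x ^ k * y ^ (n - k) * n.choose k := by
  rw [add_pow]
  refine sum_subset (range_subset_range.2 (by omega)) fun k _ hk => ?_
  rw [mem_range, not_lt] at hk
  rw [Nat.choose_eq_zero_of_lt (by omega), Nat.cast_zero, mul_zero]

theorem Acoef_cons (r : ℕ) (m : Fin (r + 1) → ℕ) (n : ℕ) (ν : Fin r → ℕ) :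
    Acoef (r + 1) m (Fin.cons n ν)
      = (if ∑ j, ν j ≤ ∑ j, m j then (∑ j, m j - ∑ j, ν j).choose n else 0)
        * Acoef r (fun j => m j.succ) ν := by
  unfold Acoef
  rw [Fin.prod_univ_succ]
  congr 1
  · simp
  · refine prod_congr rfl fun j _ => ?_
    rw [← add_sum_Ioi_eq_sum_Ici, ← add_sum_Ioi_eq_sum_Ici, Fin.sum_Ioi_succ, Fin.sum_Ioi_succ]
    simp

theorem Acoef_eq_zero_of_lt {r : ℕ} {m ν : Fin r → ℕ} (h : ∑ j, m j < ∑ j, ν j) :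
    Acoef r m ν = 0 := by
  induction r with
  | zero => simp at h
  | succ r ih =>
    induction ν using Fin.consCases with
    | cons n ν =>
      rw [Acoef_cons]
      rw [Fin.sum_cons] at h
      obtain htail | htail := lt_or_ge (∑ j : Fin r, m j.succ) (∑ j, ν j)
      · rw [ih htail, mul_zero]
      · rw [Fin.sum_univ_succ] at h ⊢
        rw [if_pos (by omega), Nat.choose_eq_zero_of_lt (by omega), zero_mul]

theorem Acoef_cons_of_le (r : ℕ) (m : Fin (r + 1) → ℕ) (n : ℕ) (ν : Fin r → ℕ)
    (h : ∑ j, ν j ≤ ∑ j : Fin r, m j.succ) :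
    Acoef (r + 1) m (Fin.cons n ν)
      = (m 0 + (∑ j : Fin r, m j.succ - ∑ j, ν j)).choose n * Acoef r (fun j => m j.succ) ν := by
  rw [Acoef_cons, Fin.sum_univ_succ, if_pos (by omega), Nat.add_sub_assoc h]

section prevPoint

variable {R : Type*} {r : ℕ}

def prevPoint (a : R) (w : Fin r → R) (j : Fin r) : R :=
  if j.val = 0 then a else w ⟨j.val - 1, (Nat.sub_le _ _).trans_lt j.isLt⟩

@[simp]
theorem prevPoint_zero (a : R) (w : Fin (r + 1) → R) :
    prevPoint a w 0 = a :=
  rfl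

@[simp]
theorem prevPoint_succ (a : R) (w : Fin (r + 1) → R) (j : Fin r) :
    prevPoint a w j.succ = prevPoint (w 0) (fun j => w j.succ) j := by
  rcases j with ⟨_ | j, hj⟩ <;> rfl

end prevPoint

theorem prod_sub_pow_eq_sum_piFinset {R : Type*} [CommRing R] (r : ℕ) (m : Fin r → ℕ)
    (w : Fin r → R) (τ a : R) {N : ℕ} (hN : ∑ j, m j ≤ N) :
    ∏ j, (w j - τ) ^ m j
      = ∑ ν ∈ Fintype.piFinset (fun _ : Fin r => range (N + 1)),
          Acoef r m ν * (∏ j, (w j - prevPoint a w j) ^ ν j) * (a - τ) ^ (∑ j, m j - ∑ j, ν j) := by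
  induction r generalizing a with
  | zero => simp [Acoef]
  | succ r ih =>
    rw [Fin.sum_univ_succ] at hN
    rw [Fin.prod_univ_succ, ih _ _ (w 0) (by omega), mul_sum, Fintype.sum_piFinset_succ, sum_comm]
    refine sum_congr rfl fun ν _ => ?_
    simp only [Fin.sum_univ_succ, Fin.prod_univ_succ, Fin.cons_zero, Fin.cons_succ,
      prevPoint_zero, prevPoint_succ]
    set M := ∑ j : Fin r, m j.succ
    set V := ∑ j, ν j
    obtain hle | hlt := le_or_gt V M
    · have hsub : w 0 - τ = (w 0 - a) + (a - τ) := by ring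
      rw [mul_comm, mul_assoc, ← pow_add, hsub,
        add_pow_eq_sum_range_of_le _ _ (show M - V + m 0 ≤ N by omega), mul_sum]
      refine sum_congr rfl fun n _ => ?_
      rw [Acoef_cons_of_le r m n ν hle, show m 0 + M - (n + V) = M - V + m 0 - n by omega,
        add_comm (M - V)]
      push_cast
      ring
    · simp [Acoef_cons, Acoef_eq_zero_of_lt hlt]

/-- the polynomial identity
`∏_{j=1}^r (w_j − τ)^{m_j} = Σ A^{[m]}_{n} (w₁−a)^{n₁}(w₂−w₁)^{n₂}⋯(w_r−w_{r−1})^{n_r}(a−τ)^n`,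
the sum ranging over all tuples `(n₁,…,n_r)` of nonnegative integers with
`n₁ + ⋯ + n_r + n = m₁ + ⋯ + m_r` (equivalently `n₁ = m₁+⋯+m_r − n₂−⋯−n_r − n` with
`0 ≤ n ≤ m₁+⋯+m_r`); tuples violating the chain conditions contribute `0`. -/
theorem stmt6 {R : Type*} [CommRing R] (r : ℕ) (m : Fin r → ℕ)
    (w : Fin r → R) (τ a : R) :
    ∏ j : Fin r, (w j - τ) ^ (m j)
      = ∑ ν ∈ Fintype.piFinset (fun _ : Fin r => Finset.range ((∑ j, m j) + 1)),
          if (∑ j, ν j) ≤ ∑ j, m j then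
            (Acoef r m ν : R)
              * (∏ j : Fin r,
                  (w j - (if h : j.val = 0 then a
                          else w ⟨j.val - 1, by have := j.isLt; omega⟩)) ^ (ν j))
              * (a - τ) ^ ((∑ j, m j) - (∑ j, ν j))
          else 0 := by
  rw [prod_sub_pow_eq_sum_piFinset r m w τ a le_rfl]
  refine sum_congr rfl fun ν _ => ?_
  split_ifs with h
  · rfl
  · simp [Acoef_eq_zero_of_lt (not_le.mp h)]
end

section
/- Let f₁(τ) = Σ_{n≥1} c₁(n) e^{2πinτ} and f₂(τ) = Σ_{n≥1} c₂(n) e^{2πinτ} with polynomially bounded coefficients. For Re(s₁), Re(s₂) sufficiently large and α ∈ ℝ, define Λ_{f₁,f₂}(α; s₁,s₂) := ∫_α^{i∞} f₁(w₁)(w₁−α)^{s₁−1} ∫_{w₁}^{i∞} f₂(w₂)(w₂−w₁)^{s₂−1} dw₂ dw₁, with both integrals along vertical lines. Then Λ_{f₁,f₂}(α; s₁,s₂) = Γ(s₁)Γ(s₂)/(−2πi)^{s₁+s₂} · Σ_{n₁,n₂≥1} c₁(n₁)c₂(n₂) e^{2πi(n₁+n₂)α} (n₁+n₂)^{−s₁}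 n₂^{−s₂}. -/
/-!
Both integrals are Mellin transforms along vertical rays. For an exponential series
`∑ aᵢ e(νᵢ w)` with `νᵢ > 0`, moving `w` up by `it` gives `∑ aᵢ e(νᵢ w) e^{-2πνᵢ t}`, whose Mellin
transform is `Γ(s) ∑ aᵢ e(νᵢ w) (2πνᵢ)^{-s}` (`hasSum_mellin`); the factor `i^s` coming from
`(it)^{s-1} d(it)` combines with `(2π)^{-s}` into `(-2πi)^{-s}` for principal branches.
The inner integral therefore replaces `f₂(w₁)` by `Γ(s₂)(-2πi)^{-s₂} ∑ c₂(n) n^{-s₂} e(n w₁)`.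
Multiplied by `f₁(w₁)` this is an exponential series indexed by pairs `(n₁, n₂)` with frequency
`n₁ + n₂`, and the same evaluation applies to the outer integral.
-/

open Complex MeasureTheory Real Set

theorem ofReal_mul_cpow {t : ℝ} (ht : 0 < t) {z : ℂ} (hz : z ≠ 0) (w : ℂ) :
    ((t : ℂ) * z) ^ w = (t : ℂ) ^ w * z ^ w := by
  rw [cpow_def_of_ne_zero (mul_ne_zero (ofReal_ne_zero.mpr ht.ne') hz),
    cpow_def_of_ne_zero (ofReal_ne_zero.mpr ht.ne'), cpow_def_of_ne_zero hz,
    log_ofReal_mul ht hz, ← Complex.exp_add, ofReal_log ht.le, add_mul]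

theorem I_cpow_mul_neg_I_cpow (s : ℂ) : I ^ s * (-I) ^ s = 1 := by
  rw [cpow_def_of_ne_zero I_ne_zero, cpow_def_of_ne_zero (neg_ne_zero.mpr I_ne_zero), log_I,
    log_neg_I, ← Complex.exp_add, ← Complex.exp_zero]
  ring_nf

theorem I_cpow_div_ofReal_two_pi_mul_cpow {ν : ℝ} (hν : 0 < ν) (s : ℂ) :
    I ^ s / ((2 * π * ν : ℝ) : ℂ) ^ s = (ν : ℂ) ^ (-s) / (-2 * π * I) ^ s := by
  have h2π : (0 : ℝ) < 2 * π := by positivity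
  have hsplit : (-2 * π * I : ℂ) = ((2 * π : ℝ) : ℂ) * -I := by push_cast; ring
  rw [hsplit, ofReal_mul_cpow h2π (neg_ne_zero.mpr I_ne_zero), ofReal_mul,
    mul_cpow_ofReal_nonneg h2π.le hν.le, cpow_neg,
    eq_inv_of_mul_eq_one_right (I_cpow_mul_neg_I_cpow s)]
  have hI : I ^ s ≠ 0 := cpow_ne_zero_iff.mpr (.inl I_ne_zero)
  have h2π' : ((2 * π : ℝ) : ℂ) ^ s ≠ 0 := cpow_ne_zero_iff.mpr (.inl (by exact_mod_cast h2π.ne'))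
  have hν' : (ν : ℂ) ^ s ≠ 0 := cpow_ne_zero_iff.mpr (.inl (by exact_mod_cast hν.ne'))
  field_simp

theorem I_mul_integral_mul_ofReal_mul_I_cpow (F : ℝ → ℂ) (s : ℂ) :
    I * ∫ t in Ioi (0 : ℝ), F t * ((t : ℂ) * I) ^ (s - 1) = I ^ s * mellin F s := by
  have hI : I ^ s = I * I ^ (s - 1) := by
    rw [cpow_sub _ _ I_ne_zero, cpow_one, mul_div_cancel₀ _ I_ne_zero]
  rw [mellin, hI, mul_assoc, ← integral_const_mul (I ^ (s - 1))]
  congr 1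
  refine setIntegral_congr_fun measurableSet_Ioi fun t ht => ?_
  rw [ofReal_mul_cpow ht I_ne_zero, smul_eq_mul]
  ring

theorem norm_cexp_two_pi_I_mul (ν : ℝ) (z : ℂ) :
    ‖cexp (2 * π * I * ν * z)‖ = rexp (-(2 * π * ν * z.im)) := by
  rw [norm_exp]
  congr 1
  simp

theorem norm_cexp_two_pi_I_mul_le_one {ν : ℝ} (hν : 0 ≤ ν) {z : ℂ} (hz : 0 ≤ z.im) :
    ‖cexp (2 * π * I * ν * z)‖ ≤ 1 := by
  rw [norm_cexp_two_pi_I_mul, Real.exp_le_one_iff, neg_nonpos]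
  positivity

theorem cexp_two_pi_I_mul_add_mul_I (ν : ℝ) (w : ℂ) (t : ℝ) :
    cexp (2 * π * I * ν * (w + t * I)) = cexp (2 * π * I * ν * w) * rexp (-(2 * π * ν) * t) := by
  rw [ofReal_exp, ← Complex.exp_add]
  congr 1
  push_cast
  linear_combination (2 * π * ν * t : ℂ) * I_sq

section ExponentialSeries

variable {ι κ : Type*}

theorem I_mul_integral_tsum_cexp_mul_cpow [Countable ι] {a : ι → ℂ} {ν : ι → ℝ} {w s : ℂ}
    (hν : ∀ i, a i = 0 ∨ 0 < ν i) (hw : 0 ≤ w.im) (hs : 0 < s.re)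
    (hexp : ∀ t > 0, Summable fun i => ‖a i‖ * rexp (-(2 * π * ν i * t)))
    (hdir : Summable fun i => ‖a i‖ / ν i ^ s.re) :
    I * ∫ t in Ioi (0 : ℝ), (∑' i, a i * cexp (2 * π * I * ν i * (w + t * I))) * (t * I) ^ (s - 1)
      = Gamma s / (-2 * π * I) ^ s * ∑' i, a i * cexp (2 * π * I * ν i * w) * (ν i : ℂ) ^ (-s) := by
  set b : ι → ℂ := fun i => a i * cexp (2 * π * I * ν i * w)
  have hb : ∀ i, ‖b i‖ ≤ ‖a i‖ := fun i => by
    rcases hν i with h | h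
    · simp [b, h]
    · exact (norm_mul_le _ _).trans
        (mul_le_of_le_one_right (norm_nonneg _) (norm_cexp_two_pi_I_mul_le_one h.le hw))
  have hF : ∀ t ∈ Ioi (0 : ℝ), HasSum (fun i => b i * rexp (-(2 * π * ν i) * t))
      (∑' i, a i * cexp (2 * π * I * ν i * (w + t * I))) := fun t ht => by
    simp only [cexp_two_pi_I_mul_add_mul_I, ← mul_assoc]
    refine (Summable.of_norm ((hexp t ht).of_nonneg_of_le (fun _ => norm_nonneg _)
      fun i => ?_)).hasSum
    rw [norm_mul, norm_real, Real.norm_of_nonneg (Real.exp_nonneg _), neg_mul, mul_assoc]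
    exact mul_le_mul_of_nonneg_right (hb i) (Real.exp_nonneg _)
  have hsum : Summable fun i => ‖b i‖ / (2 * π * ν i) ^ s.re := hdir.of_norm_bounded fun i => by
    rcases hν i with h | h
    · simp [b, h]
    · rw [Real.norm_of_nonneg (by positivity)]
      refine div_le_div₀ (norm_nonneg _) (hb i) (by positivity) (Real.rpow_le_rpow h.le ?_ hs.le)
      nlinarith [Real.pi_gt_three]
  have hmellin := hasSum_mellin (fun i => (hν i).imp (fun h => by simp [b, h])
    (fun h => by positivity)) hs hF hsum
  rw [I_mul_integral_mul_ofReal_mul_I_cpow, ← hmellin.tsum_eq, ← tsum_mul_left, ← tsum_mul_left]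
  refine tsum_congr fun i => ?_
  rcases hν i with h | h
  · simp [b, h]
  · calc I ^ s * (Gamma s * b i / ((2 * π * ν i : ℝ) : ℂ) ^ s)
        = Gamma s * b i * (I ^ s / ((2 * π * ν i : ℝ) : ℂ) ^ s) := by ring
      _ = _ := by rw [I_cpow_div_ofReal_two_pi_mul_cpow h]; ring

theorem tsum_mul_tsum_cexp {a : ι → ℂ} {b : κ → ℂ} {μ : ι → ℝ} {ν : κ → ℝ} {w : ℂ}
    (ha : Summable fun i => ‖a i‖ * rexp (-(2 * π * μ i * w.im)))
    (hb : Summable fun j => ‖b j‖ * rexp (-(2 * π * ν j * w.im))) :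
    (∑' i, a i * cexp (2 * π * I * μ i * w)) * ∑' j, b j * cexp (2 * π * I * ν j * w)
      = ∑' p : ι × κ, a p.1 * b p.2 * cexp (2 * π * I * (μ p.1 + ν p.2 : ℝ) * w) := by
  rw [tsum_mul_tsum_of_summable_norm (by simpa only [norm_mul, norm_cexp_two_pi_I_mul] using ha)
    (by simpa only [norm_mul, norm_cexp_two_pi_I_mul] using hb)]
  refine tsum_congr fun p => ?_
  rw [ofReal_add, mul_add, add_mul, Complex.exp_add]
  ring

theorem summable_norm_mul_exp_neg_of_summable_norm {b : κ → ℂ} {ν : κ → ℝ}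
    (hb : Summable fun j => ‖b j‖) (hν : ∀ j, 0 ≤ ν j) {t : ℝ} (ht : 0 ≤ t) :
    Summable fun j => ‖b j‖ * rexp (-(2 * π * ν j * t)) :=
  hb.of_nonneg_of_le (fun _ => by positivity) fun j =>
    mul_le_of_le_one_right (norm_nonneg _)
      (Real.exp_le_one_iff.mpr (neg_nonpos.mpr (by have := hν j; positivity)))

theorem summable_norm_mul_mul_exp_neg_add {a : ι → ℂ} {b : κ → ℂ} {μ : ι → ℝ} {ν : κ → ℝ}
    {t : ℝ} (ha : Summable fun i => ‖a i‖ * rexp (-(2 * π * μ i * t)))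
    (hb : Summable fun j => ‖b j‖ * rexp (-(2 * π * ν j * t))) :
    Summable fun p : ι × κ => ‖a p.1 * b p.2‖ * rexp (-(2 * π * (μ p.1 + ν p.2) * t)) := by
  refine (ha.mul_of_nonneg hb (fun _ => by positivity) fun _ => by positivity).congr fun p => ?_
  rw [norm_mul, show -(2 * π * (μ p.1 + ν p.2) * t) = -(2 * π * μ p.1 * t) + -(2 * π * ν p.2 * t)
    by ring, Real.exp_add]
  ring

theorem summable_norm_mul_div_add_rpow {a : ι → ℂ} {b : κ → ℂ} {μ : ι → ℝ} {ν : κ → ℝ}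
    {σ : ℝ} (hμ : ∀ i, a i = 0 ∨ 0 < μ i) (hν : ∀ j, 0 ≤ ν j) (hσ : 0 ≤ σ)
    (ha : Summable fun i => ‖a i‖ / μ i ^ σ) (hb : Summable fun j => ‖b j‖) :
    Summable fun p : ι × κ => ‖a p.1 * b p.2‖ / (μ p.1 + ν p.2) ^ σ := by
  have ha₀ : ∀ i, 0 ≤ ‖a i‖ / μ i ^ σ := fun i =>
    (hμ i).elim (fun h => by simp [h]) (fun h => by positivity)
  refine (ha.mul_of_nonneg hb ha₀ fun _ => norm_nonneg _).of_norm_bounded fun p => ?_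
  rcases hμ p.1 with h | h
  · simp [h]
  · have hpos : 0 < μ p.1 + ν p.2 := by linarith [hν p.2]
    rw [Real.norm_of_nonneg (by positivity), norm_mul, div_mul_eq_mul_div]
    exact div_le_div_of_nonneg_left (by positivity) (by positivity)
      (Real.rpow_le_rpow h.le (by linarith [hν p.2]) hσ)

end ExponentialSeries

section PolynomialGrowth

variable {E : Type*} [SeminormedAddCommGroup E] {c : ℕ → E} {k : ℕ} {B : ℝ}

theorem exists_norm_le_mul_pow (hc0 : c 0 = 0)
    (h : ∃ C C' : ℝ, ∀ n : ℕ, ‖c n‖ ≤ C' * (n : ℝ) ^ C) :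
    ∃ (k : ℕ) (B : ℝ), ∀ n : ℕ, ‖c n‖ ≤ B * (n : ℝ) ^ k := by
  obtain ⟨C, C', hC⟩ := h
  refine ⟨⌈C⌉₊, max C' 0, fun n => ?_⟩
  rcases Nat.eq_zero_or_pos n with rfl | hn
  · simp only [hc0, norm_zero, Nat.cast_zero]
    positivity
  · have h1 : (1 : ℝ) ≤ n := by exact_mod_cast hn
    calc ‖c n‖ ≤ C' * (n : ℝ) ^ C := hC n
      _ ≤ max C' 0 * (n : ℝ) ^ (⌈C⌉₊ : ℝ) :=
        mul_le_mul (le_max_left _ _) (Real.rpow_le_rpow_of_exponent_le h1 (Nat.le_ceil C))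
          (by positivity) (le_max_right _ _)
      _ = max C' 0 * (n : ℝ) ^ ⌈C⌉₊ := by rw [Real.rpow_natCast]

theorem eq_zero_or_natCast_pos (hc0 : c 0 = 0) (n : ℕ) : c n = 0 ∨ 0 < (n : ℝ) := by
  rcases Nat.eq_zero_or_pos n with rfl | hn
  exacts [.inl hc0, .inr (by exact_mod_cast hn)]

theorem summable_norm_mul_exp_neg_two_pi_mul (hc : ∀ n, ‖c n‖ ≤ B * (n : ℝ) ^ k) {t : ℝ}
    (ht : 0 < t) : Summable fun n : ℕ => ‖c n‖ * rexp (-(2 * π * n * t)) := by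
  refine ((Real.summable_pow_mul_exp_neg_nat_mul k (r := 2 * π * t) (by positivity)).mul_left
    B).of_nonneg_of_le (fun _ => by positivity) fun n => ?_
  rw [← mul_assoc, show -(2 * π * n * t) = -(2 * π * t) * n by ring]
  exact mul_le_mul_of_nonneg_right (hc n) (Real.exp_nonneg _)

theorem summable_norm_div_rpow (hc : ∀ n, ‖c n‖ ≤ B * (n : ℝ) ^ k) {σ : ℝ} (hσ : k + 1 < σ) :
    Summable fun n : ℕ => ‖c n‖ / (n : ℝ) ^ σ := by
  refine ((Real.summable_nat_rpow.mpr (by linarith : (k : ℝ) - σ < -1)).mul_left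
    B).of_nonneg_of_le (fun _ => by positivity) fun n => ?_
  rcases Nat.eq_zero_or_pos n with rfl | hn
  · simp [Real.zero_rpow (by linarith [(Nat.cast_nonneg k : (0 : ℝ) ≤ k)] : σ ≠ 0),
      Real.zero_rpow (by linarith : (k : ℝ) - σ ≠ 0)]
  · have hn' : (0 : ℝ) < n := by exact_mod_cast hn
    rw [Real.rpow_sub hn', Real.rpow_natCast, ← mul_div_assoc]
    exact div_le_div_of_nonneg_right (hc n) (by positivity)

end PolynomialGrowth

section QSeries

variable {c c₁ c₂ d : ℕ → ℂ} {k k₁ k₂ : ℕ} {B B₁ B₂ : ℝ} {w s : ℂ}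

theorem summable_norm_mul_natCast_cpow_neg (hc : ∀ n, ‖c n‖ ≤ B * (n : ℝ) ^ k)
    (hs : k + 1 < s.re) : Summable fun n : ℕ => ‖c n * (n : ℂ) ^ (-s)‖ := by
  have hs0 : s.re ≠ 0 := by linarith [(Nat.cast_nonneg k : (0 : ℝ) ≤ k)]
  simpa only [norm_mul, norm_natCast_cpow_of_re_ne_zero _ (by simpa using hs0 : (-s).re ≠ 0),
    neg_re, Real.rpow_neg (Nat.cast_nonneg _), div_eq_mul_inv]
    using summable_norm_div_rpow hc hs

theorem I_mul_integral_tsum_nat_cexp_mul_cpow (hc0 : c 0 = 0)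
    (hc : ∀ n, ‖c n‖ ≤ B * (n : ℝ) ^ k) (hw : 0 ≤ w.im) (hs : k + 1 < s.re) :
    I * ∫ t in Ioi (0 : ℝ), (∑' n : ℕ, c n * cexp (2 * π * I * n * (w + t * I))) * (t * I) ^ (s - 1)
      = Gamma s / (-2 * π * I) ^ s * ∑' n : ℕ, c n * cexp (2 * π * I * n * w) * (n : ℂ) ^ (-s) := by
  simpa only [ofReal_natCast] using I_mul_integral_tsum_cexp_mul_cpow (ν := fun n : ℕ => (n : ℝ))
    (eq_zero_or_natCast_pos hc0) hw (by linarith [(Nat.cast_nonneg k : (0 : ℝ) ≤ k)])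
    (fun t ht => summable_norm_mul_exp_neg_two_pi_mul hc ht) (summable_norm_div_rpow hc hs)

theorem I_mul_integral_tsum_prod_cexp_mul_cpow (hc0 : c 0 = 0)
    (hc : ∀ n, ‖c n‖ ≤ B * (n : ℝ) ^ k) (hd : Summable fun n => ‖d n‖) (hw : 0 ≤ w.im)
    (hs : k + 1 < s.re) :
    I * ∫ t in Ioi (0 : ℝ), (∑' q : ℕ × ℕ, c q.1 * d q.2 *
        cexp (2 * π * I * ((q.1 : ℝ) + q.2 : ℝ) * (w + t * I))) * (t * I) ^ (s - 1)
      = Gamma s / (-2 * π * I) ^ s * ∑' q : ℕ × ℕ, c q.1 * d q.2 *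
          cexp (2 * π * I * ((q.1 : ℝ) + q.2 : ℝ) * w) * (((q.1 : ℝ) + q.2 : ℝ) : ℂ) ^ (-s) := by
  have hs0 : 0 < s.re := by linarith [(Nat.cast_nonneg k : (0 : ℝ) ≤ k)]
  have hν : ∀ q : ℕ × ℕ, c q.1 * d q.2 = 0 ∨ 0 < (q.1 : ℝ) + q.2 := fun q =>
    (eq_zero_or_natCast_pos hc0 q.1).imp (fun h => by simp [h]) fun h => by positivity
  have hexp : ∀ t > 0, Summable fun q : ℕ × ℕ =>
      ‖c q.1 * d q.2‖ * rexp (-(2 * π * ((q.1 : ℝ) + q.2) * t)) :=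
    fun t ht => summable_norm_mul_mul_exp_neg_add (summable_norm_mul_exp_neg_two_pi_mul hc ht)
      (summable_norm_mul_exp_neg_of_summable_norm hd (fun n => n.cast_nonneg) ht.le)
  have hdir : Summable fun q : ℕ × ℕ => ‖c q.1 * d q.2‖ / ((q.1 : ℝ) + q.2) ^ s.re :=
    summable_norm_mul_div_add_rpow (eq_zero_or_natCast_pos hc0) (fun n => n.cast_nonneg) hs0.le
      (summable_norm_div_rpow hc hs) hd
  exact I_mul_integral_tsum_cexp_mul_cpow hν hw hs0 hexp hdir

theorem tsum_nat_cexp_mul_I_mul_integral_tsum_nat_cexp_mul_cpow (hc₂0 : c₂ 0 = 0)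
    (hc₁ : ∀ n, ‖c₁ n‖ ≤ B₁ * (n : ℝ) ^ k₁) (hc₂ : ∀ n, ‖c₂ n‖ ≤ B₂ * (n : ℝ) ^ k₂)
    (hw : 0 < w.im) (hs : k₂ + 1 < s.re) :
    (∑' n : ℕ, c₁ n * cexp (2 * π * I * n * w)) * (I * ∫ t in Ioi (0 : ℝ),
        (∑' n : ℕ, c₂ n * cexp (2 * π * I * n * (w + t * I))) * (t * I) ^ (s - 1))
      = Gamma s / (-2 * π * I) ^ s * ∑' q : ℕ × ℕ, c₁ q.1 * (c₂ q.2 * (q.2 : ℂ) ^ (-s)) *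
          cexp (2 * π * I * ((q.1 : ℝ) + q.2 : ℝ) * w) := by
  have hprod := tsum_mul_tsum_cexp (μ := fun n : ℕ => (n : ℝ)) (ν := fun n : ℕ => (n : ℝ))
    (summable_norm_mul_exp_neg_two_pi_mul hc₁ hw)
    (summable_norm_mul_exp_neg_of_summable_norm (summable_norm_mul_natCast_cpow_neg hc₂ hs)
      (fun n => n.cast_nonneg) hw.le)
  simp only [ofReal_natCast] at hprod
  rw [I_mul_integral_tsum_nat_cexp_mul_cpow hc₂0 hc₂ hw.le hs, mul_left_comm, ← hprod]
  congr 2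
  exact tsum_congr fun n => by ring

end QSeries

/-- depth-2 completed multiple `L`-series with additive twist:
for `f₁(τ) = Σ c₁(n) q^n`, `f₂(τ) = Σ c₂(n) q^n` with polynomially bounded coefficients and
`Re(s₁), Re(s₂)` sufficiently large,
`Λ_{f₁,f₂}(α; s₁,s₂) = ∫_α^{i∞} f₁(w₁)(w₁−α)^{s₁−1} ∫_{w₁}^{i∞} f₂(w₂)(w₂−w₁)^{s₂−1} dw₂ dw₁`
(vertical paths `w₁ = α + it₁`, `w₂ = w₁ + it₂`, principal branches) equals
`Γ(s₁)Γ(s₂)/(−2πi)^{s₁+s₂} Σ_{n₁,n₂≥1} c₁(n₁)c₂(n₂) e^{2πi(n₁+n₂)α} (n₁+n₂)^{−s₁} n₂^{−s₂}`. -/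
theorem stmt9 (c₁ c₂ : ℕ → ℂ) (hc₁0 : c₁ 0 = 0) (hc₂0 : c₂ 0 = 0)
    (hgrow₁ : ∃ C C' : ℝ, ∀ n : ℕ, ‖c₁ n‖ ≤ C' * (n : ℝ) ^ C)
    (hgrow₂ : ∃ C C' : ℝ, ∀ n : ℕ, ‖c₂ n‖ ≤ C' * (n : ℝ) ^ C)
    (α : ℝ) :
    ∃ s₀ : ℝ, ∀ s₁ s₂ : ℂ, s₀ < s₁.re → s₀ < s₂.re →
      Complex.I * ∫ t₁ in Set.Ioi (0 : ℝ),
          ((∑' n : ℕ, c₁ n * Complex.exp (2 * Real.pi * Complex.I * (n : ℂ)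
              * ((α : ℂ) + (t₁ : ℂ) * Complex.I)))
            * ((t₁ : ℂ) * Complex.I) ^ (s₁ - 1)
            * (Complex.I * ∫ t₂ in Set.Ioi (0 : ℝ),
                (∑' n : ℕ, c₂ n * Complex.exp (2 * Real.pi * Complex.I * (n : ℂ)
                    * ((α : ℂ) + (t₁ : ℂ) * Complex.I + (t₂ : ℂ) * Complex.I)))
                  * ((t₂ : ℂ) * Complex.I) ^ (s₂ - 1)))
        = Complex.Gamma s₁ * Complex.Gamma s₂
            / (-2 * (Real.pi : ℂ) * Complex.I) ^ (s₁ + s₂)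
            * ∑' p : ℕ × ℕ,
                c₁ p.1 * c₂ p.2
                  * Complex.exp (2 * Real.pi * Complex.I * ((p.1 : ℂ) + (p.2 : ℂ)) * (α : ℂ))
                  * ((p.1 : ℂ) + (p.2 : ℂ)) ^ (-s₁) * (p.2 : ℂ) ^ (-s₂) := by
  obtain ⟨k₁, B₁, hb₁⟩ := exists_norm_le_mul_pow hc₁0 hgrow₁
  obtain ⟨k₂, B₂, hb₂⟩ := exists_norm_le_mul_pow hc₂0 hgrow₂
  refine ⟨k₁ + k₂ + 1, fun s₁ s₂ hs₁ hs₂ => ?_⟩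
  have hσ₁ : (k₁ : ℝ) + 1 < s₁.re := by linarith [(Nat.cast_nonneg k₂ : (0 : ℝ) ≤ k₂)]
  have hσ₂ : (k₂ : ℝ) + 1 < s₂.re := by linarith [(Nat.cast_nonneg k₁ : (0 : ℝ) ≤ k₁)]
  calc _ = I * ∫ t₁ in Ioi (0 : ℝ), Gamma s₂ / (-2 * π * I) ^ s₂ *
        ((∑' q : ℕ × ℕ, c₁ q.1 * (c₂ q.2 * (q.2 : ℂ) ^ (-s₂)) *
          cexp (2 * π * I * ((q.1 : ℝ) + q.2 : ℝ) * (α + t₁ * I))) * (t₁ * I) ^ (s₁ - 1)) := by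
        congr 1
        refine setIntegral_congr_fun measurableSet_Ioi fun t₁ ht₁ => ?_
        rw [mul_right_comm, tsum_nat_cexp_mul_I_mul_integral_tsum_nat_cexp_mul_cpow hc₂0 hb₁ hb₂
          (by simpa using ht₁) hσ₂]
        ring
    _ = _ := by
        rw [integral_const_mul, mul_left_comm, I_mul_integral_tsum_prod_cexp_mul_cpow hc₁0 hb₁
          (summable_norm_mul_natCast_cpow_neg hb₂ hσ₂) (by simp) hσ₁,
          cpow_add _ _ (by simp [Real.pi_ne_zero, I_ne_zero]), ← mul_assoc]
        congr 1
        · ring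
        · exact tsum_congr fun p => by push_cast; ring
end
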